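/- Let G = (V, E) be a finite directed graph with no self-loops and Q ∈ ℕ, Q ≥ 1. Let P = {(x, a) ∈ ℝ^V × ℝ^E : x_u − x_v = a_{(u,v)} for all (u,v) ∈ E, and 0 ≤ x_v ≤ Q for all v ∈ V}. Suppose z₁ = (x₁, a₁) and z₂ = (x₂, a₂) are distinct extreme points of P such that the closed segment [z₁, z₂] is an extreme subset of P (i.e., z₁ and z₂ are adjacent vertices of the polytope, the segment being an edge). Then there exist a subset S ⊆ V inducing a connected subgraph and a nonzero integer c such that x₁ − x₂ = c·χ_S and a₁ − a₂ = c·(χ_{δ⁺(S)} − χ_{δ⁻(S)}). -/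

import Mathlib

/-!
The map `x ↦ (x, (x u - x v)_{(u, v) ∈ E})` is an injective linear map sending the cube
`[0, Q]^V` onto `P`, so it identifies the extreme points and extreme subsets of the two.
A vertex of the cube has all coordinates in `{0, Q}`, and the endpoints of an edge of the cube
differ in exactly one coordinate `v`: exchanging the `v`-th coordinates of the endpoints keeps
their midpoint but leaves the segment unless all other coordinates agree. Hence `S = {v}` and
`c = ±Q`.
-/

open scoped Classical

/-- The undirected support graph of the directed edge set `E`. -/
def undirGraph {V : Type*} (E : Finset (V × V)) : SimpleGraph V where
  Adj u v := u ≠ v ∧ ((u, v) ∈ E ∨ (v, u) ∈ E)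
  symm := by
    refine ⟨fun u v h => ?_⟩
    exact ⟨h.1.symm, h.2.elim Or.inr Or.inl⟩
  loopless := by refine ⟨fun u h => ?_⟩; exact h.1 rfl

/-- `S ⊆ V` induces a connected subgraph of the (undirected version of the) graph. -/
def InducesConnected {V : Type*} (E : Finset (V × V)) (S : Set V) : Prop :=
  S.Nonempty ∧ ((undirGraph E).induce S).Connected

/-- Integer indicator vector of a set of vertices. -/
noncomputable def chiV {V : Type*} (S : Set V) : V → ℤ :=
  S.indicator 1

/-- Integer indicator vector of a set of edges. -/
noncomputable def chiE {V : Type*} {E : Finset (V × V)}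
    (T : Set {e : V × V // e ∈ E}) : {e : V × V // e ∈ E} → ℤ :=
  T.indicator 1

/-- Outgoing edges of `S`. -/
def deltaPlus {V : Type*} (E : Finset (V × V)) (S : Set V) :
    Set {e : V × V // e ∈ E} :=
  {e | (e : V × V).1 ∈ S ∧ (e : V × V).2 ∉ S}

/-- Incoming edges of `S`. -/
def deltaMinus {V : Type*} (E : Finset (V × V)) (S : Set V) :
    Set {e : V × V // e ∈ E} :=
  {e | (e : V × V).1 ∉ S ∧ (e : V × V).2 ∈ S}

/-- The conformal (sign-compatible, coordinatewise) partial order `x ⊑ y`. -/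
def Sqle {ι : Type*} (x y : ι → ℤ) : Prop :=
  ∀ i, 0 ≤ x i * y i ∧ |x i| ≤ |y i|

/-- `(x, a)` lies in the integer kernel of `A_TV`. -/
def InKerATV {V : Type*} (E : Finset (V × V)) (x : V → ℤ)
    (a : {e : V × V // e ∈ E} → ℤ) : Prop :=
  ∀ e : {e : V × V // e ∈ E}, x (e : V × V).1 - x (e : V × V).2 = a e

/-- `(x, a)` is a Graver basis element of `A_TV`: a `⊑`-minimal nonzero
element of the integer kernel. -/
def InGraverATV {V : Type*} (E : Finset (V × V)) (x : V → ℤ)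
    (a : {e : V × V // e ∈ E} → ℤ) : Prop :=
  InKerATV E x a ∧ ¬(x = 0 ∧ a = 0) ∧
    ∀ (x' : V → ℤ) (a' : {e : V × V // e ∈ E} → ℤ),
      InKerATV E x' a' → ¬(x' = 0 ∧ a' = 0) → Sqle x' x → Sqle a' a →
        x' = x ∧ a' = a

/-- The polytope `P` of the linear relaxation of the substituted problem:
`x_u − x_v = a_{(u,v)}` on every edge and `0 ≤ x ≤ Q`. -/
def PTV {V : Type*} (E : Finset (V × V)) (Q : ℕ) :
    Set ((V → ℝ) × ({e : V × V // e ∈ E} → ℝ)) :=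
  {z | (∀ e : {e : V × V // e ∈ E}, z.1 (e : V × V).1 - z.1 (e : V × V).2 = z.2 e) ∧
    ∀ v, 0 ≤ z.1 v ∧ z.1 v ≤ (Q : ℝ)}

open Set

section Extreme

variable {𝕜 E F : Type*} [Ring 𝕜] [PartialOrder 𝕜] [IsOrderedRing 𝕜] [AddCommGroup E]
  [Module 𝕜 E] [AddCommGroup F] [Module 𝕜 F]

theorem isExtreme_image_iff {f : E →ₗ[𝕜] F} (hf : Function.Injective f) {A B : Set E} :
    IsExtreme 𝕜 (f '' A) (f '' B) ↔ IsExtreme 𝕜 A B := by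
  have hseg : ∀ x y, f '' openSegment 𝕜 x y = openSegment 𝕜 (f x) (f y) :=
    image_openSegment _ f.toAffineMap
  simp only [isExtreme_iff, image_subset_image_iff hf, forall_mem_image, ← hseg,
    hf.mem_set_image]

theorem mem_extremePoints_image_iff {f : E →ₗ[𝕜] F} (hf : Function.Injective f) {A : Set E}
    {x : E} : f x ∈ (f '' A).extremePoints 𝕜 ↔ x ∈ A.extremePoints 𝕜 := by
  rw [← isExtreme_singleton, ← image_singleton, isExtreme_image_iff hf, isExtreme_singleton]

end Extreme

section Box

variable {𝕜 : Type*} [Field 𝕜] [LinearOrder 𝕜] [IsStrictOrderedRing 𝕜]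

theorem eq_or_eq_of_mem_extremePoints_Icc {a b x : 𝕜} (hx : x ∈ (Icc a b).extremePoints 𝕜) :
    x = a ∨ x = b := by
  by_contra! h
  obtain ⟨⟨hax, hxb⟩, hext⟩ := hx
  have hax' := lt_of_le_of_ne hax h.1.symm
  have hxb' := lt_of_le_of_ne hxb h.2
  have hab := hax'.trans hxb'
  refine h.1 (hext (left_mem_Icc.2 hab.le) (right_mem_Icc.2 hab.le) ?_).symm
  rw [openSegment_eq_Ioo hab]
  exact ⟨hax', hxb'⟩

theorem eq_of_isExtreme_pi_segment {ι : Type*} {s : ι → Set 𝕜} {x y : ι → 𝕜}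
    (h : IsExtreme 𝕜 (univ.pi s) (segment 𝕜 x y)) {i : ι} (hi : x i ≠ y i) {j : ι}
    (hj : j ≠ i) : x j = y j := by
  classical
  have hx := h.1 (left_mem_segment 𝕜 x y)
  have hy := h.1 (right_mem_segment 𝕜 x y)
  have hmid : (1 / 2 : 𝕜) • x + (1 / 2 : 𝕜) • y ∈
      openSegment 𝕜 (Function.update x i (y i)) (Function.update y i (x i)) := by
    refine ⟨1 / 2, 1 / 2, by norm_num, by norm_num, by norm_num, funext fun k => ?_⟩
    rcases eq_or_ne k i with rfl | hk
    · simp only [Pi.add_apply, Pi.smul_apply, Function.update_self, smul_eq_mul]; ring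
    · simp only [Pi.add_apply, Pi.smul_apply, Function.update_of_ne hk]
  obtain ⟨a, b, -, -, hab, hxy⟩ := h.2 ((update_mem_pi_iff_of_mem hx).2 fun _ => hy i trivial)
    ((update_mem_pi_iff_of_mem hy).2 fun _ => hx i trivial)
    ⟨1 / 2, 1 / 2, by norm_num, by norm_num, by norm_num, rfl⟩ hmid
  have hxi := congrFun hxy i
  have hxj := congrFun hxy j
  simp only [Pi.add_apply, Pi.smul_apply, Function.update_self, Function.update_of_ne hj,
    smul_eq_mul] at hxi hxj
  have ha : a = 0 := by
    have : a * (x i - y i) = 0 := by linear_combination hxi - y i * hab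
    exact (mul_eq_zero.1 this).resolve_right (sub_ne_zero.2 hi)
  rw [ha, zero_mul, zero_add, show b = 1 by linear_combination hab - ha, one_mul] at hxj
  exact hxj.symm

end Box

section Graph

variable {V : Type*} (E : Finset (V × V))

def edgeDiff : (V → ℝ) →ₗ[ℝ] ({e : V × V // e ∈ E} → ℝ) :=
  LinearMap.pi fun e =>
    LinearMap.proj (R := ℝ) (φ := fun _ : V => ℝ) (e : V × V).1 - LinearMap.proj (e : V × V).2

@[simp]
theorem edgeDiff_apply (x : V → ℝ) (e : {e : V × V // e ∈ E}) :
    edgeDiff E x e = x (e : V × V).1 - x (e : V × V).2 :=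
  rfl

theorem edgeDiff_intCast_mul_chiV (c : ℤ) (S : Set V) :
    edgeDiff E (fun v => ((c * chiV S v : ℤ) : ℝ)) =
      fun e => ((c * (chiE (deltaPlus E S) e - chiE (deltaMinus E S) e) : ℤ) : ℝ) := by
  funext e
  simp only [edgeDiff_apply, chiV, chiE, deltaPlus, deltaMinus, indicator_apply, mem_ofPred_eq,
    Pi.one_apply]
  by_cases h₁ : (e : V × V).1 ∈ S <;> by_cases h₂ : (e : V × V).2 ∈ S <;> simp [h₁, h₂]

theorem PTV_eq_image (Q : ℕ) :
    PTV E Q = LinearMap.id.prod (edgeDiff E) '' univ.pi fun _ => Icc 0 (Q : ℝ) := by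
  ext ⟨x, a⟩
  constructor
  · rintro ⟨hdiff, hbox⟩
    exact ⟨x, fun v _ => hbox v, Prod.ext rfl (funext hdiff)⟩
  · rintro ⟨x, hx, hxa⟩
    obtain ⟨rfl, rfl⟩ := Prod.ext_iff.1 hxa
    exact ⟨fun _ => rfl, fun v => hx v trivial⟩

theorem inducesConnected_singleton (v : V) : InducesConnected E {v} :=
  ⟨singleton_nonempty v, ⟨fun u w => by rw [Subsingleton.elim u w]⟩⟩

end Graph

theorem exists_sub_eq_intCast_mul_chiV_singleton {V : Type*} {Q : ℕ} {x y : V → ℝ}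
    (hx : x ∈ (univ.pi fun _ => Icc 0 (Q : ℝ)).extremePoints ℝ)
    (hy : y ∈ (univ.pi fun _ => Icc 0 (Q : ℝ)).extremePoints ℝ)
    (hxy : IsExtreme ℝ (univ.pi fun _ => Icc 0 (Q : ℝ)) (segment ℝ x y)) (hne : x ≠ y) :
    ∃ (v : V) (c : ℤ), c ≠ 0 ∧ x - y = fun u => ((c * chiV {v} u : ℤ) : ℝ) := by
  have hnat : ∀ z ∈ (univ.pi fun _ : V => Icc 0 (Q : ℝ)).extremePoints ℝ, ∀ u, ∃ n : ℕ,
      z u = n := by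
    intro z hz u
    rw [extremePoints_pi] at hz
    rcases eq_or_eq_of_mem_extremePoints_Icc (hz u trivial) with h | h
    exacts [⟨0, by simpa using h⟩, ⟨Q, h⟩]
  obtain ⟨v, hv⟩ := Function.ne_iff.1 hne
  obtain ⟨m, hm⟩ := hnat x hx v
  obtain ⟨n, hn⟩ := hnat y hy v
  refine ⟨v, m - n, fun h => hv ?_, funext fun u => ?_⟩
  · rw [hm, hn]
    exact_mod_cast sub_eq_zero.1 h
  · rcases eq_or_ne u v with rfl | hu
    · simp [chiV, hm, hn]
    · simp [chiV, hu, eq_of_isExtreme_pi_segment hxy hv hu]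

theorem polytope_edges_are_graver_multiples_general
    {V : Type*} (E : Finset (V × V)) (Q : ℕ)
    (z₁ z₂ : (V → ℝ) × ({e : V × V // e ∈ E} → ℝ))
    (hne : z₁ ≠ z₂)
    (h₁ : z₁ ∈ Set.extremePoints ℝ (PTV E Q))
    (h₂ : z₂ ∈ Set.extremePoints ℝ (PTV E Q))
    (hedge : IsExtreme ℝ (PTV E Q) (segment ℝ z₁ z₂)) :
    ∃ (S : Set V) (c : ℤ), InducesConnected E S ∧ c ≠ 0 ∧
      (z₁.1 - z₂.1 = fun v => ((c * chiV S v : ℤ) : ℝ)) ∧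
      (z₁.2 - z₂.2 = fun f =>
        ((c * (chiE (deltaPlus E S) f - chiE (deltaMinus E S) f) : ℤ) : ℝ)) := by
  rw [PTV_eq_image] at h₁ h₂ hedge
  set f := LinearMap.id.prod (edgeDiff E)
  have hf : Function.Injective f := fun x y h => congrArg Prod.fst h
  obtain ⟨x₁, -, rfl⟩ := h₁.1
  obtain ⟨x₂, -, rfl⟩ := h₂.1
  rw [← f.coe_toAffineMap, ← image_segment, f.coe_toAffineMap, isExtreme_image_iff hf] at hedge
  obtain ⟨v, c, hc, hdiff⟩ := exists_sub_eq_intCast_mul_chiV_singleton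
    ((mem_extremePoints_image_iff hf).1 h₁) ((mem_extremePoints_image_iff hf).1 h₂) hedge
    (ne_of_apply_ne f hne)
  refine ⟨{v}, c, inducesConnected_singleton E v, hc, hdiff, ?_⟩
  rw [← edgeDiff_intCast_mul_chiV, ← hdiff, map_sub]
  rfl

/-- Edges of the polytope `P` are integer multiples of the
connected-subgraph Graver moves: if `z₁ ≠ z₂` are extreme points of `P` whose
segment is an extreme subset of `P`, then `z₁ − z₂ = c (χ_S, χ_{δ⁺(S)} − χ_{δ⁻(S)})`
for a set `S` inducing a connected subgraph and a nonzero integer `c`. -/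
theorem polytope_edges_are_graver_multiples
    {V : Type*} [Fintype V] [DecidableEq V] (E : Finset (V × V))
    (hloop : ∀ e ∈ E, e.1 ≠ e.2) (Q : ℕ) (hQ : 1 ≤ Q)
    (z₁ z₂ : (V → ℝ) × ({e : V × V // e ∈ E} → ℝ))
    (hne : z₁ ≠ z₂)
    (h₁ : z₁ ∈ Set.extremePoints ℝ (PTV E Q))
    (h₂ : z₂ ∈ Set.extremePoints ℝ (PTV E Q))
    (hedge : IsExtreme ℝ (PTV E Q) (segment ℝ z₁ z₂)) :
    ∃ (S : Set V) (c : ℤ), InducesConnected E S ∧ c ≠ 0 ∧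
      (z₁.1 - z₂.1 = fun v => ((c * chiV S v : ℤ) : ℝ)) ∧
      (z₁.2 - z₂.2 = fun f =>
        ((c * (chiE (deltaPlus E S) f - chiE (deltaMinus E S) f) : ℤ) : ℝ)) :=
  polytope_edges_are_graver_multiples_general E Q z₁ z₂ hne h₁ h₂ hedge
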